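/- Let 0 < a < b. For each natural number n ≥ 1 define γ_n as the infimum of (∫_a^b r ((Δ_nΦ)(r))² dr)/(Φ'(a))² over all functions Φ : ℝ → ℝ that are twice continuously differentiable on [a, b] and satisfy Φ(a) = Φ(b) = 0 and Φ'(a) ≠ 0. Then γ_n ≤ γ_{n+1} for every n ≥ 1. -/

import Mathlib

open MeasureTheory

/-- The operator `(Δ_n Ψ)(r) = Ψ''(r) + Ψ'(r)/r − n² Ψ(r)/r²`. -/
noncomputable def DeltaOp (n : ℕ) (Ψ : ℝ → ℝ) : ℝ → ℝ :=
  fun r => deriv (deriv Ψ) r + deriv Ψ r / r - (n : ℝ) ^ 2 * Ψ r / r ^ 2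

/-- `γ_n`: the infimum of `(∫_a^b r ((Δ_nΦ)(r))² dr) / (Φ'(a))²` over all `Φ` that are twice
continuously differentiable on `[a, b]` with `Φ(a) = Φ(b) = 0` and `Φ'(a) ≠ 0`. -/
noncomputable def gamma (a b : ℝ) (n : ℕ) : ℝ :=
  sInf {y : ℝ | ∃ Φ : ℝ → ℝ, ContDiffOn ℝ 2 Φ (Set.Icc a b) ∧ Φ a = 0 ∧ Φ b = 0 ∧
    derivWithin Φ (Set.Icc a b) a ≠ 0 ∧
    y = (∫ r in Set.Ioo a b, r * (DeltaOp n Φ r) ^ 2) / (derivWithin Φ (Set.Icc a b) a) ^ 2}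

/-!
Write `L = Φ'' + Φ'/r`. Then
`r (L - β Φ/r²)² - r (L - α Φ/r²)² = -2 (β - α) L Φ / r + (β² - α²) Φ² / r³`,
and up to the derivative of the boundary term `-2 (β - α) Φ (Φ'/r + Φ/r²)`, which vanishes at
`a` and `b`, this is `2 (β - α) Φ'² / r + (β - α) (β + α - 4) Φ² / r³ ≥ 0` as soon as `α ≤ β`
and `α + β ≥ 4`. With `α = n²`, `β = (n + 1)²` every quotient in the definition of `γ_n` grows
when `n` is replaced by `n + 1`, and hence so does the infimum.
-/

open Set

lemma radial_sq_sub_boundary_le {α β r : ℝ} (hr : 0 < r) (hαβ : α ≤ β) (hαβ4 : 4 ≤ α + β)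
    (p q s : ℝ) :
    r * (s + q / r - α * p / r ^ 2) ^ 2
        - 2 * (β - α) * (q ^ 2 / r + p * s / r + p * q / r ^ 2 - 2 * p ^ 2 / r ^ 3)
      ≤ r * (s + q / r - β * p / r ^ 2) ^ 2 := by
  have hdiff : r * (s + q / r - β * p / r ^ 2) ^ 2 - (r * (s + q / r - α * p / r ^ 2) ^ 2
        - 2 * (β - α) * (q ^ 2 / r + p * s / r + p * q / r ^ 2 - 2 * p ^ 2 / r ^ 3))
      = 2 * (β - α) * (q ^ 2 / r) + (β - α) * (β + α - 4) * (p ^ 2 / r ^ 3) := by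
    field_simp
    ring
  have hnonneg : 0 ≤ 2 * (β - α) * (q ^ 2 / r) + (β - α) * (β + α - 4) * (p ^ 2 / r ^ 3) := by
    have : 0 ≤ β - α := by linarith
    have : 0 ≤ β + α - 4 := by linarith
    positivity
  linarith

lemma hasDerivAt_mul_div_add_div_sq {Φ Φ' Φ'' : ℝ → ℝ} {x : ℝ} (hx : x ≠ 0)
    (hΦ : HasDerivAt Φ (Φ' x) x) (hΦ' : HasDerivAt Φ' (Φ'' x) x) :
    HasDerivAt (fun r => Φ r * (Φ' r / r + Φ r / r ^ 2))
      (Φ' x ^ 2 / x + Φ x * Φ'' x / x + Φ x * Φ' x / x ^ 2 - 2 * Φ x ^ 2 / x ^ 3) x := by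
  refine (hΦ.mul ((hΦ'.div (hasDerivAt_id' x) hx).add
    (hΦ.div ((hasDerivAt_id' x).pow 2) (pow_ne_zero 2 hx)))).congr_deriv ?_
  simp only [Pi.add_apply, Pi.div_apply, Pi.pow_apply]
  field_simp
  ring

theorem integral_radial_sq_le {a b α β : ℝ} {Φ Φ' Φ'' : ℝ → ℝ} (ha : 0 < a) (hab : a ≤ b)
    (hαβ : α ≤ β) (hαβ4 : 4 ≤ α + β)
    (hΦc : ContinuousOn Φ (Icc a b)) (hΦ'c : ContinuousOn Φ' (Icc a b))
    (hΦ''c : ContinuousOn Φ'' (Icc a b))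
    (hΦ : ∀ x ∈ Ioo a b, HasDerivAt Φ (Φ' x) x) (hΦ' : ∀ x ∈ Ioo a b, HasDerivAt Φ' (Φ'' x) x)
    (hΦa : Φ a = 0) (hΦb : Φ b = 0) :
    ∫ r in a..b, r * (Φ'' r + Φ' r / r - α * Φ r / r ^ 2) ^ 2
      ≤ ∫ r in a..b, r * (Φ'' r + Φ' r / r - β * Φ r / r ^ 2) ^ 2 := by
  have hne : ∀ x ∈ Icc a b, x ≠ 0 := fun x hx => (ha.trans_le hx.1).ne'
  have hint : ∀ f : ℝ → ℝ, ContinuousOn f (Icc a b) → IntervalIntegrable f volume a b :=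
    fun f hf => hf.intervalIntegrable_of_Icc hab
  set G : ℝ → ℝ := fun r =>
    Φ' r ^ 2 / r + Φ r * Φ'' r / r + Φ r * Φ' r / r ^ 2 - 2 * Φ r ^ 2 / r ^ 3
  have hGc : ContinuousOn G (Icc a b) := by
    fun_prop (disch := intro x hx; have := hne x hx; positivity)
  have hG : ∫ r in a..b, G r = 0 := by
    rw [intervalIntegral.integral_eq_sub_of_hasDerivAt_of_le hab
      (by fun_prop (disch := intro x hx; have := hne x hx; positivity))
      (fun x hx => hasDerivAt_mul_div_add_div_sq (hne x (Ioo_subset_Icc_self hx))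
        (hΦ x hx) (hΦ' x hx)) (hint G hGc), hΦa, hΦb]
    simp
  have hfc : ∀ γ : ℝ, ContinuousOn (fun r => r * (Φ'' r + Φ' r / r - γ * Φ r / r ^ 2) ^ 2)
      (Icc a b) := fun γ => by
    fun_prop (disch := intro x hx; have := hne x hx; positivity)
  calc ∫ r in a..b, r * (Φ'' r + Φ' r / r - α * Φ r / r ^ 2) ^ 2
      = ∫ r in a..b, (r * (Φ'' r + Φ' r / r - α * Φ r / r ^ 2) ^ 2 - 2 * (β - α) * G r) := by
        rw [intervalIntegral.integral_sub (hint _ (hfc α)) ((hint G hGc).const_mul _),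
          intervalIntegral.integral_const_mul, hG, mul_zero, sub_zero]
    _ ≤ ∫ r in a..b, r * (Φ'' r + Φ' r / r - β * Φ r / r ^ 2) ^ 2 :=
        intervalIntegral.integral_mono_on hab ((hint _ (hfc α)).sub ((hint G hGc).const_mul _))
          (hint _ (hfc β)) fun x hx =>
            radial_sq_sub_boundary_le (ha.trans_le hx.1) hαβ hαβ4 (Φ x) (Φ' x) (Φ'' x)

lemma deltaOp_eq_derivWithin_Icc (n : ℕ) (Φ : ℝ → ℝ) {a b x : ℝ} (hx : x ∈ Ioo a b) :
    DeltaOp n Φ x = derivWithin (derivWithin Φ (Icc a b)) (Icc a b) x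
      + derivWithin Φ (Icc a b) x / x - (n : ℝ) ^ 2 * Φ x / x ^ 2 := by
  have hIcc : ∀ y ∈ Ioo a b, Icc a b ∈ nhds y := fun y hy => Icc_mem_nhds hy.1 hy.2
  have hderiv : deriv Φ =ᶠ[nhds x] derivWithin Φ (Icc a b) :=
    Filter.eventually_of_mem (isOpen_Ioo.mem_nhds hx) fun y hy =>
      (derivWithin_of_mem_nhds (hIcc y hy)).symm
  rw [DeltaOp, hderiv.deriv_eq, hderiv.eq_of_nhds,
    ← derivWithin_of_mem_nhds (f := derivWithin Φ (Icc a b)) (hIcc x hx)]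

theorem integral_deltaOp_sq_le_succ {a b : ℝ} {n : ℕ} {Φ : ℝ → ℝ} (ha : 0 < a) (hab : a < b)
    (hn : 1 ≤ n) (hΦ : ContDiffOn ℝ 2 Φ (Icc a b)) (hΦa : Φ a = 0) (hΦb : Φ b = 0) :
    ∫ r in Ioo a b, r * DeltaOp n Φ r ^ 2 ≤ ∫ r in Ioo a b, r * DeltaOp (n + 1) Φ r ^ 2 := by
  set Φ' := derivWithin Φ (Icc a b)
  have hs : UniqueDiffOn ℝ (Icc a b) := uniqueDiffOn_Icc hab
  have hΦ' : ContDiffOn ℝ 1 Φ' (Icc a b) := hΦ.derivWithin hs le_rfl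
  have hasDerivAt_of_contDiffOn : ∀ {f : ℝ → ℝ}, ContDiffOn ℝ 1 f (Icc a b) →
      ∀ x ∈ Ioo a b, HasDerivAt f (derivWithin f (Icc a b) x) x := fun hf x hx =>
    (hf.differentiableOn one_ne_zero x (Ioo_subset_Icc_self hx)).hasDerivWithinAt.hasDerivAt
      (Icc_mem_nhds hx.1 hx.2)
  have hrw : ∀ m : ℕ, ∫ r in Ioo a b, r * DeltaOp m Φ r ^ 2
      = ∫ r in a..b, r * (derivWithin Φ' (Icc a b) r + Φ' r / r - (m : ℝ) ^ 2 * Φ r / r ^ 2) ^ 2 :=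
    fun m => by
      rw [intervalIntegral.integral_of_le hab.le, integral_Ioc_eq_integral_Ioo]
      exact setIntegral_congr_fun measurableSet_Ioo fun x hx => by
        rw [deltaOp_eq_derivWithin_Icc m Φ hx]
  have hn' : (1 : ℝ) ≤ n := by exact_mod_cast hn
  rw [hrw, hrw]
  exact integral_radial_sq_le ha hab.le (by gcongr; omega) (by push_cast; nlinarith)
    hΦ.continuousOn hΦ'.continuousOn (hΦ'.derivWithin hs (m := 0) (zero_add _).le).continuousOn
    (hasDerivAt_of_contDiffOn (hΦ.of_le one_le_two)) (hasDerivAt_of_contDiffOn hΦ') hΦa hΦb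

def gammaQuotients (a b : ℝ) (n : ℕ) : Set ℝ :=
  {y : ℝ | ∃ Φ : ℝ → ℝ, ContDiffOn ℝ 2 Φ (Icc a b) ∧ Φ a = 0 ∧ Φ b = 0 ∧
    derivWithin Φ (Icc a b) a ≠ 0 ∧
    y = (∫ r in Ioo a b, r * (DeltaOp n Φ r) ^ 2) / (derivWithin Φ (Icc a b) a) ^ 2}

lemma gamma_eq_sInf_gammaQuotients (a b : ℝ) (n : ℕ) :
    gamma a b n = sInf (gammaQuotients a b n) := rfl

lemma gammaQuotients_nonempty {a b : ℝ} (hab : a < b) (n : ℕ) :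
    (gammaQuotients a b n).Nonempty := by
  have hderiv : HasDerivAt (fun r => (r - a) * (b - r)) (b - a) a :=
    (((hasDerivAt_id' a).sub_const a).mul ((hasDerivAt_id' a).const_sub b)).congr_deriv
      (by ring)
  have hderivWithin : derivWithin (fun r => (r - a) * (b - r)) (Icc a b) a = b - a :=
    hderiv.hasDerivWithinAt.derivWithin (uniqueDiffOn_Icc hab a (left_mem_Icc.2 hab.le))
  refine ⟨_, fun r => (r - a) * (b - r), by fun_prop, by simp, by simp, ?_, rfl⟩
  rw [hderivWithin]
  exact sub_ne_zero.2 hab.ne'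

lemma gammaQuotients_bddBelow {a b : ℝ} (ha : 0 < a) (n : ℕ) :
    BddBelow (gammaQuotients a b n) := by
  refine ⟨0, ?_⟩
  rintro _ ⟨Φ, -, -, -, -, rfl⟩
  refine div_nonneg (setIntegral_nonneg measurableSet_Ioo fun x hx => ?_) (sq_nonneg _)
  have : 0 ≤ x := (ha.trans hx.1).le
  positivity

theorem gamma_monotone (a b : ℝ) (ha : 0 < a) (hab : a < b) :
    ∀ n : ℕ, 1 ≤ n → gamma a b n ≤ gamma a b (n + 1) := by
  intro n hn
  rw [gamma_eq_sInf_gammaQuotients, gamma_eq_sInf_gammaQuotients]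
  refine le_csInf (gammaQuotients_nonempty hab _) ?_
  rintro _ ⟨Φ, hΦ, hΦa, hΦb, hΦ'a, rfl⟩
  exact csInf_le_of_le (gammaQuotients_bddBelow ha n) ⟨Φ, hΦ, hΦa, hΦb, hΦ'a, rfl⟩
    (div_le_div_of_nonneg_right (integral_deltaOp_sq_le_succ ha hab hn hΦ hΦa hΦb) (sq_nonneg _))
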